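/- arXiv:1804.07504 — 4 statements merged into one kernel-verified Lean document; each statement's English description precedes it below -/
import Mathlib

section
/- Let A, B ∈ SL₃(ℂ) be matrices with tr(ABA⁻¹B⁻¹) ≠ tr(BAB⁻¹A⁻¹). Then both A and B are regular, i.e., for every λ ∈ ℂ the eigenspace ker(A − λ·Id) has dimension at most 1, and likewise every eigenspace ker(B − λ·Id) has dimension at most 1. -/
/-!
If an eigenspace of `A` has codimension at most one, then `A - λ` has rank at most one, so
`(A - λ)² = c (A - λ)` and `A⁻¹ = p + q A` for some scalars `p, q`. Expanding, both
`tr (A B A⁻¹ B⁻¹)` and `tr (B A B⁻¹ A⁻¹)` equal `p tr A + q tr (A B A B⁻¹)` by cyclicity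
of the trace.
-/

open Matrix LinearMap Module

theorem Module.End.exists_mul_self_eq_smul_of_finrank_range_le_one {K V : Type*} [Field K]
    [AddCommGroup V] [Module K V] [FiniteDimensional K V] (f : Module.End K V)
    (hf : finrank K (range f) ≤ 1) : ∃ c : K, f * f = c • f := by
  obtain ⟨⟨v, hv⟩⟩ := (Submodule.finrank_le_one_iff_isPrincipal _).mp hf
  have hmul (x : V) : ∃ a : K, a • v = f x :=
    Submodule.mem_span_singleton.mp (hv ▸ mem_range_self f x)
  obtain ⟨c, hc⟩ := hmul v
  refine ⟨c, LinearMap.ext fun x => ?_⟩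
  obtain ⟨a, ha⟩ := hmul x
  simp only [Module.End.mul_apply, LinearMap.smul_apply, ← ha, map_smul, ← hc, smul_comm a c]

theorem Matrix.exists_mul_self_eq_smul_of_card_le_finrank_ker_add_one {n K : Type*} [Fintype n]
    [DecidableEq n] [Field K] (M : Matrix n n K)
    (hM : Fintype.card n ≤ finrank K (ker (toLin' M)) + 1) : ∃ c : K, M * M = c • M := by
  have hrank := finrank_range_add_finrank_ker (toLin' M)
  rw [Module.finrank_fintype_fun_eq_card] at hrank
  obtain ⟨c, hc⟩ :=
    Module.End.exists_mul_self_eq_smul_of_finrank_range_le_one (toLin' M) (by omega)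
  exact ⟨c, toLin'.injective (by rwa [toLin'_mul, map_smul])⟩

theorem Units.exists_inv_eq_smul_one_add_smul_of_mul_self_eq {K A : Type*} [Field K] [Ring A]
    [Algebra K A] (a : Aˣ) {u v : K} (h : (a : A) * a = u • (a : A) + v • 1) :
    ∃ p q : K, (↑a⁻¹ : A) = p • 1 + q • (a : A) := by
  by_cases hv : v = 0
  · subst hv
    have hu : u • (↑a⁻¹ : A) = 1 := by
      have := congrArg (fun x => (↑a⁻¹ : A) * x * ↑a⁻¹) h
      simpa [← mul_assoc] using this.symm
    refine ⟨u⁻¹, 0, ?_⟩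
    rcases eq_or_ne u 0 with rfl | hu0
    · have := subsingleton_of_zero_eq_one (by simpa using hu)
      exact Subsingleton.elim _ _
    · rw [← hu, smul_smul, inv_mul_cancel₀ hu0, one_smul, zero_smul, add_zero]
  · refine ⟨-(v⁻¹ * u), v⁻¹, ?_⟩
    calc (↑a⁻¹ : A) = v⁻¹ • (↑a⁻¹ * (v • 1)) := by simp [smul_smul, hv]
      _ = v⁻¹ • (↑a⁻¹ * (a * a - u • a)) := by rw [h, add_sub_cancel_left]
      _ = _ := by simp only [mul_sub, ← mul_assoc, Units.inv_mul, one_mul, mul_smul_comm]; module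

theorem Matrix.trace_mul_mul_mul_eq_of_eq_smul_one_add_smul {n R : Type*} [Fintype n]
    [DecidableEq n] [CommRing R] {a a' b b' : Matrix n n R} (hb : b * b' = 1) {p q : R}
    (ha : a' = p • 1 + q • a) : trace (a * b * a' * b') = trace (b * a * b' * a') := by
  subst ha
  have hb' : b' * b = 1 := mul_eq_one_comm.mp hb
  have h_one : trace (b * (a * b')) = trace a := by rw [trace_mul_comm, mul_assoc, hb', mul_one]
  have h_two : trace (b * (a * (b' * a))) = trace (a * (b * (a * b'))) := by
    rw [← mul_assoc, ← mul_assoc, trace_mul_comm]; simp only [mul_assoc]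
  simp only [mul_add, add_mul, mul_smul_comm, smul_mul_assoc, mul_one, trace_add, trace_smul,
    mul_assoc, hb, h_one, h_two]

theorem Matrix.SpecialLinearGroup.trace_commutator_eq_of_card_le_finrank_ker_add_one
    {n K : Type*} [Fintype n] [DecidableEq n] [Field K] (A B : SpecialLinearGroup n K) (lam : K)
    (hA : Fintype.card n ≤ finrank K (ker (Matrix.toLin' ((A : Matrix n n K) - lam • 1))) + 1) :
    trace (↑(A * B * A⁻¹ * B⁻¹) : Matrix n n K) =
      trace (↑(B * A * B⁻¹ * A⁻¹) : Matrix n n K) := by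
  obtain ⟨c, hc⟩ := exists_mul_self_eq_smul_of_card_le_finrank_ker_add_one _ hA
  have hquad : (A : Matrix n n K) * A =
      (2 * lam + c) • (A : Matrix n n K) + (-(lam * (lam + c))) • 1 := by
    simp only [sub_mul, mul_sub, smul_mul_assoc, mul_smul_comm, one_mul, mul_one] at hc
    rw [← sub_eq_zero] at hc ⊢
    rw [← hc]
    module
  obtain ⟨p, q, hpq⟩ := (toGL A).exists_inv_eq_smul_one_add_smul_of_mul_self_eq hquad
  rw [← map_inv] at hpq
  simp only [coe_mul]
  exact trace_mul_mul_mul_eq_of_eq_smul_one_add_smul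
    (by rw [← coe_mul, mul_inv_cancel, coe_one]) hpq

theorem stmt_0 (A B : Matrix.SpecialLinearGroup (Fin 3) ℂ)
    (h : Matrix.trace ((↑(A * B * A⁻¹ * B⁻¹) : Matrix (Fin 3) (Fin 3) ℂ)) ≠
         Matrix.trace ((↑(B * A * B⁻¹ * A⁻¹) : Matrix (Fin 3) (Fin 3) ℂ))) :
    (∀ lam : ℂ, Module.finrank ℂ
        (LinearMap.ker (Matrix.toLin' ((↑A : Matrix (Fin 3) (Fin 3) ℂ) - lam • 1))) ≤ 1) ∧
    (∀ lam : ℂ, Module.finrank ℂ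
        (LinearMap.ker (Matrix.toLin' ((↑B : Matrix (Fin 3) (Fin 3) ℂ) - lam • 1))) ≤ 1) := by
  refine ⟨fun lam => ?_, fun lam => ?_⟩ <;> by_contra! hlam
  · exact h (A.trace_commutator_eq_of_card_le_finrank_ker_add_one B lam
      (by rw [Fintype.card_fin]; omega))
  · exact (h (B.trace_commutator_eq_of_card_le_finrank_ker_add_one A lam
      (by rw [Fintype.card_fin]; omega)).symm)
end

section
/- Let A, B ∈ SL₃(ℂ) be matrices with tr(ABA⁻¹B⁻¹) ≠ tr(BAB⁻¹A⁻¹). Then the subgroup generated by A and B acts irreducibly on ℂ³: there is no ℂ-linear subspace W ⊆ ℂ³ with 0 < dim W < 3 such that A·W ⊆ W and B·W ⊆ W. -/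
/-!
A subspace `W` with `0 < dim W < 3` that is invariant under `A` and `B` has either `W` or `ℂ³ ⧸ W`
one-dimensional. There `A` and `B` act by scalars, so the induced map of `BA - AB` vanishes and
`det (BA - AB) = 0`. For `C = ABA⁻¹B⁻¹` we have `(1 - C) BA = BA - AB`, so `1` is an eigenvalue
of `C`. Evaluating the characteristic polynomial of `C ∈ SL₃` at `1` gives
`det (1 - C) = tr C⁻¹ - tr C`, and `C⁻¹ = BAB⁻¹A⁻¹`.
-/

open Matrix

theorem Module.End.commute_of_finrank_eq_one {R M : Type*} [CommRing R] [StrongRankCondition R]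
    [AddCommGroup M] [Module R M] [Module.Free R M] (h : Module.finrank R M = 1)
    (u v : Module.End R M) : Commute u v := by
  obtain ⟨c, rfl, -⟩ := LinearMap.existsUnique_eq_smul_id_of_finrank_eq_one h u
  exact (Commute.one_left v).smul_left c

theorem Module.End.det_commutator_eq_zero_of_finrank_eq_one {R M : Type*} [CommRing R]
    [Nontrivial R] [AddCommGroup M] [Module R M] [Module.Free R M] [Module.Finite R M]
    (h : Module.finrank R M = 1) (u v : Module.End R M) : (u * v - v * u).det = 0 := by
  rw [(commute_of_finrank_eq_one h u v).eq, sub_self, LinearMap.det_zero, h, pow_one]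

section Invariant

variable {K V : Type*} [Field K] [AddCommGroup V] [Module K V] {W : Submodule K V}
  {f g : Module.End K V}

theorem LinearMap.restrict_commutator (hf : W ≤ W.comap f) (hg : W ≤ W.comap g)
    (hfg : W ≤ W.comap (f * g - g * f)) :
    (f * g - g * f).restrict hfg =
      f.restrict hf * g.restrict hg - g.restrict hg * f.restrict hf := rfl

theorem Submodule.mapQ_commutator (hf : W ≤ W.comap f) (hg : W ≤ W.comap g)
    (hfg : W ≤ W.comap (f * g - g * f)) :
    W.mapQ W (f * g - g * f) hfg =
      W.mapQ W f hf * W.mapQ W g hg - W.mapQ W g hg * W.mapQ W f hf := by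
  ext; rfl

theorem LinearMap.det_commutator_eq_zero_of_invariant [FiniteDimensional K V]
    (hf : W ≤ W.comap f) (hg : W ≤ W.comap g)
    (hW : Module.finrank K W = 1 ∨ Module.finrank K (V ⧸ W) = 1) :
    (f * g - g * f).det = 0 := by
  have hfg : W ≤ W.comap (f * g - g * f) := fun v hv =>
    W.sub_mem (hf (hg hv)) (hg (hf hv))
  rw [LinearMap.det_eq_det_mul_det W _ hfg]
  rcases hW with hW | hW
  · rw [restrict_commutator hf hg, Module.End.det_commutator_eq_zero_of_finrank_eq_one hW,
      zero_mul]
  · rw [Submodule.mapQ_commutator hf hg, Module.End.det_commutator_eq_zero_of_finrank_eq_one hW,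
      mul_zero]

end Invariant

theorem Matrix.det_one_sub_fin_three {R : Type*} [CommRing R] (M : Matrix (Fin 3) (Fin 3) R) :
    (1 - M).det = 1 - M.trace + M.adjugate.trace - M.det := by
  simp only [det_fin_three, Fin.isValue, sub_apply, one_apply_eq, ne_eq, Fin.reduceEq,
    not_false_eq_true, one_apply_ne, zero_sub, mul_neg, neg_mul, neg_neg, trace_fin_three,
    adjugate_fin_three, of_apply, cons_val', cons_val_zero, cons_val_fin_one, cons_val_one,
    cons_val]
  ring

theorem Matrix.SpecialLinearGroup.det_one_sub_commutator {n R : Type*} [DecidableEq n] [Fintype n]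
    [CommRing R] (A B : SpecialLinearGroup n R) :
    (1 - (↑(A * B * A⁻¹ * B⁻¹) : Matrix n n R)).det =
      ((B : Matrix n n R) * A - (A : Matrix n n R) * B).det := by
  have hmul : (↑(A * B * A⁻¹ * B⁻¹) : Matrix n n R) * (↑(B * A) : Matrix n n R) = ↑(A * B) := by
    rw [← SpecialLinearGroup.coe_mul, show A * B * A⁻¹ * B⁻¹ * (B * A) = A * B by group]
  calc (1 - (↑(A * B * A⁻¹ * B⁻¹) : Matrix n n R)).det
      = (1 - (↑(A * B * A⁻¹ * B⁻¹) : Matrix n n R)).det * (↑(B * A) : Matrix n n R).det := by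
        rw [SpecialLinearGroup.det_coe, mul_one]
    _ = ((B : Matrix n n R) * A - (A : Matrix n n R) * B).det := by
        rw [← det_mul, sub_mul, one_mul, hmul, SpecialLinearGroup.coe_mul,
          SpecialLinearGroup.coe_mul]

theorem Matrix.SpecialLinearGroup.trace_inv_eq_of_det_one_sub_eq_zero {R : Type*} [CommRing R]
    (M : SpecialLinearGroup (Fin 3) R) (h : (1 - (M : Matrix (Fin 3) (Fin 3) R)).det = 0) :
    (↑M⁻¹ : Matrix (Fin 3) (Fin 3) R).trace = (M : Matrix (Fin 3) (Fin 3) R).trace := by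
  rw [det_one_sub_fin_three, M.det_coe] at h
  rw [coe_inv]
  linear_combination h

theorem stmt_1 (A B : Matrix.SpecialLinearGroup (Fin 3) ℂ)
    (h : Matrix.trace ((↑(A * B * A⁻¹ * B⁻¹) : Matrix (Fin 3) (Fin 3) ℂ)) ≠
         Matrix.trace ((↑(B * A * B⁻¹ * A⁻¹) : Matrix (Fin 3) (Fin 3) ℂ))) :
    ¬ ∃ W : Submodule ℂ (Fin 3 → ℂ),
        0 < Module.finrank ℂ W ∧ Module.finrank ℂ W < 3 ∧
        (∀ v ∈ W, (↑A : Matrix (Fin 3) (Fin 3) ℂ).mulVec v ∈ W) ∧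
        (∀ v ∈ W, (↑B : Matrix (Fin 3) (Fin 3) ℂ).mulVec v ∈ W) := by
  rintro ⟨W, hpos, hlt, hA, hB⟩
  have hW : Module.finrank ℂ W = 1 ∨ Module.finrank ℂ ((Fin 3 → ℂ) ⧸ W) = 1 := by
    have := W.finrank_quotient_add_finrank
    rw [Module.finrank_fin_fun] at this
    omega
  have hdet :
      ((B : Matrix (Fin 3) (Fin 3) ℂ) * A - (A : Matrix (Fin 3) (Fin 3) ℂ) * B).det = 0 := by
    rw [← LinearMap.det_toLin', map_sub, toLin'_mul, toLin'_mul]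
    exact LinearMap.det_commutator_eq_zero_of_invariant hB hA hW
  have hinv : B * A * B⁻¹ * A⁻¹ = (A * B * A⁻¹ * B⁻¹)⁻¹ := by group
  rw [hinv, SpecialLinearGroup.trace_inv_eq_of_det_one_sub_eq_zero _
    ((SpecialLinearGroup.det_one_sub_commutator A B).trans hdet)] at h
  exact h rfl
end

section
/- Let A ∈ SL₃(ℂ). If the three matrices Id, A, A⁻¹ are linearly dependent over ℂ (i.e., there exist a, b, c ∈ ℂ, not all zero, with a·A + b·Id + c·A⁻¹ = 0), then A has an eigenvalue λ ∈ ℂ whose eigenspace ker(A − λ·Id) has dimension at least 2. -/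
/-!
Since `A⁻¹ A = 1`, multiplying the relation by `A` gives a nonzero quadratic relation
`a A² + b A + c = 0`, which factors over `ℂ` as `(A - λ)(A - μ) = 0`.
By rank–nullity, `dim ker (A - λ) + dim ker (A - μ) ≥ 3`, so one of the two kernels
has dimension at least `2`.
-/

open Matrix Polynomial

theorem exists_vieta_of_ne_zero {K : Type*} [Field K] [IsAlgClosed K] {a : K} (ha : a ≠ 0)
    (b c : K) : ∃ lam mu : K, a * (lam + mu) = -b ∧ a * (lam * mu) = c := by
  obtain ⟨lam, hlam⟩ := IsAlgClosed.exists_root (C a * X ^ 2 + C b * X + C c)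
    (by rw [degree_quadratic ha]; decide)
  have hmonic : lam * lam - (-b / a) * lam + c / a = 0 := by
    simp only [IsRoot, eval_add, eval_mul, eval_C, eval_pow, eval_X] at hlam
    field_simp
    linear_combination hlam
  obtain ⟨mu, -, hsum, hprod⟩ := vieta_formula_quadratic hmonic
  refine ⟨lam, mu, ?_, ?_⟩
  · rw [hsum]; field_simp
  · rw [hprod]; field_simp

theorem exists_mul_sub_smul_one_eq_zero {K R : Type*} [Field K] [IsAlgClosed K] [Ring R]
    [Nontrivial R] [Algebra K R] {x : R} {a b c : K} (hne : ¬(a = 0 ∧ b = 0 ∧ c = 0))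
    (hx : a • (x * x) + b • x + c • (1 : R) = 0) :
    ∃ lam mu : K, (x - lam • 1) * (x - mu • 1) = 0 := by
  by_cases ha : a = 0
  · subst ha
    rw [zero_smul, zero_add] at hx
    by_cases hb : b = 0
    · subst hb
      rw [zero_smul, zero_add, smul_eq_zero] at hx
      exact absurd ⟨rfl, rfl, hx.resolve_right one_ne_zero⟩ hne
    · have hlin : x - (-(c / b)) • (1 : R) = 0 := by
        have : b • (x - (-(c / b)) • (1 : R)) = 0 := by
          rw [smul_sub, smul_smul, mul_neg, mul_div_cancel₀ c hb, ← hx]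
          module
        exact (smul_eq_zero.mp this).resolve_left hb
      exact ⟨-(c / b), -(c / b), by rw [hlin, zero_mul]⟩
  · obtain ⟨lam, mu, hsum, hprod⟩ := exists_vieta_of_ne_zero ha b c
    refine ⟨lam, mu, ?_⟩
    have : a • ((x - lam • 1) * (x - mu • 1)) = 0 := by
      rw [← hx, neg_eq_iff_eq_neg.mp hsum.symm, ← hprod]
      simp only [sub_mul, mul_sub, smul_mul_assoc, mul_smul_comm, one_mul, mul_one]
      module
    exact (smul_eq_zero.mp this).resolve_left ha

theorem LinearMap.finrank_le_finrank_ker_add_finrank_ker {K V W U : Type*} [DivisionRing K]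
    [AddCommGroup V] [Module K V] [AddCommGroup W] [Module K W] [AddCommGroup U] [Module K U]
    [FiniteDimensional K V] [FiniteDimensional K W] {f : W →ₗ[K] U} {g : V →ₗ[K] W}
    (hfg : f ∘ₗ g = 0) :
    Module.finrank K V ≤ Module.finrank K (LinearMap.ker f) + Module.finrank K (LinearMap.ker g) := by
  rw [← g.finrank_range_add_finrank_ker]
  exact Nat.add_le_add_right (Submodule.finrank_mono (LinearMap.range_le_ker_iff.mpr hfg)) _

theorem stmt_5 (A : Matrix.SpecialLinearGroup (Fin 3) ℂ)
    (h : ∃ a b c : ℂ, ¬(a = 0 ∧ b = 0 ∧ c = 0) ∧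
        a • (↑A : Matrix (Fin 3) (Fin 3) ℂ) + b • (1 : Matrix (Fin 3) (Fin 3) ℂ)
          + c • (↑(A⁻¹) : Matrix (Fin 3) (Fin 3) ℂ) = 0) :
    ∃ lam : ℂ, 2 ≤ Module.finrank ℂ
        (LinearMap.ker (Matrix.toLin' ((↑A : Matrix (Fin 3) (Fin 3) ℂ) - lam • 1))) := by
  obtain ⟨a, b, c, hne, hrel⟩ := h
  have hinv : (↑(A⁻¹) : Matrix (Fin 3) (Fin 3) ℂ) * A = 1 := by
    exact congrArg Subtype.val (inv_mul_cancel A)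
  set M : Matrix (Fin 3) (Fin 3) ℂ := ↑A
  have hquad : a • (M * M) + b • M + c • 1 = 0 := by
    simpa only [add_mul, smul_mul_assoc, one_mul, hinv, zero_mul] using congrArg (· * M) hrel
  obtain ⟨lam, mu, hfactor⟩ := exists_mul_sub_smul_one_eq_zero hne hquad
  have hdim := LinearMap.finrank_le_finrank_ker_add_finrank_ker
    (by rw [← toLin'_mul, hfactor, map_zero] : toLin' (M - lam • 1) ∘ₗ toLin' (M - mu • 1) = 0)
  rw [Module.finrank_fin_fun] at hdim
  by_cases hlam : 2 ≤ Module.finrank ℂ (LinearMap.ker (toLin' (M - lam • 1)))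
  · exact ⟨lam, hlam⟩
  · exact ⟨mu, by omega⟩
end

section
/- Let N ≥ 1 and let x₁, …, x_N be elements of a commutative ring. Let M be the N×N matrix whose (k, j) entry (for 1 ≤ k, j ≤ N) is the (k−1)-st elementary symmetric polynomial of the N−1 variables {x₁, …, x_N} \ {x_j} (so M_{k,j} = ∂e_k/∂x_j, where e_k is the k-th elementary symmetric polynomial of x₁, …, x_N). Then det(M) = ∏_{1 ≤ i < j ≤ N} (xᵢ − xⱼ). -/
open Finset

private lemma esymm_erase_rec {R : Type*} [CommRing R] {N : ℕ} (x : Fin N → R)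
    (j : Fin N) (k : ℕ) :
    ∑ t ∈ Finset.powersetCard (k + 1) (Finset.univ : Finset (Fin N)), ∏ i ∈ t, x i
      = (∑ t ∈ Finset.powersetCard (k + 1) (Finset.univ.erase j), ∏ i ∈ t, x i)
        + x j * ∑ t ∈ Finset.powersetCard k (Finset.univ.erase j), ∏ i ∈ t, x i := by
  have hins : (Finset.univ : Finset (Fin N)) = insert j (Finset.univ.erase j) := by
    rw [Finset.insert_erase (Finset.mem_univ j)]
  conv_lhs => rw [hins, Finset.powersetCard_succ_insert (Finset.notMem_erase j _)]
  rw [Finset.sum_union]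
  · congr 1
    rw [Finset.sum_image]
    · rw [Finset.mul_sum]
      refine Finset.sum_congr rfl fun t ht => ?_
      have hjt : j ∉ t := fun h =>
        Finset.notMem_erase j _ ((Finset.mem_powersetCard.mp ht).1 h)
      rw [Finset.prod_insert hjt]
    · intro s hs t ht hst
      have hjs : j ∉ s := fun h =>
        Finset.notMem_erase j _ ((Finset.mem_powersetCard.mp hs).1 h)
      have hjt : j ∉ t := fun h =>
        Finset.notMem_erase j _ ((Finset.mem_powersetCard.mp ht).1 h)
      have := congrArg (Finset.erase · j) hst
      simpa [Finset.erase_insert hjs, Finset.erase_insert hjt] using this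
  · rw [Finset.disjoint_right]
    intro t ht ht'
    obtain ⟨s, hs, rfl⟩ := Finset.mem_image.mp ht
    have : j ∉ insert j s := fun h =>
      Finset.notMem_erase j _ ((Finset.mem_powersetCard.mp ht').1 h)
    exact this (Finset.mem_insert_self j s)

private lemma esymm_erase_eq {R : Type*} [CommRing R] {N : ℕ} (x : Fin N → R)
    (j : Fin N) (k : ℕ) :
    ∑ t ∈ Finset.powersetCard k (Finset.univ.erase j), ∏ i ∈ t, x i
      = ∑ i ∈ Finset.range (k + 1),
          (-x j) ^ i *
            ∑ t ∈ Finset.powersetCard (k - i) (Finset.univ : Finset (Fin N)), ∏ i ∈ t, x i := by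
  induction k with
  | zero => simp
  | succ k ih =>
    have hrec := esymm_erase_rec x j k
    have : ∑ t ∈ Finset.powersetCard (k + 1) (Finset.univ.erase j), ∏ i ∈ t, x i
        = (∑ t ∈ Finset.powersetCard (k + 1) (Finset.univ : Finset (Fin N)), ∏ i ∈ t, x i)
          - x j * ∑ t ∈ Finset.powersetCard k (Finset.univ.erase j), ∏ i ∈ t, x i := by
      rw [hrec]; ring
    rw [this, ih, Finset.sum_range_succ'
      (fun i => (-x j) ^ i *
        ∑ t ∈ Finset.powersetCard (k + 1 - i) (Finset.univ : Finset (Fin N)), ∏ i ∈ t, x i)]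
    simp only [pow_zero, one_mul, Nat.sub_zero, Finset.mul_sum]
    rw [add_comm, sub_eq_add_neg, add_comm]
    congr 1
    simp only [show ∀ i : ℕ, 1 + k - (i + 1) = k - i from fun i => by omega,
      show ∀ i : ℕ, k + 1 - (i + 1) = k - i from fun i => by omega]
    rw [← Finset.sum_neg_distrib]
    refine Finset.sum_congr rfl fun i hi => ?_
    rw [← Finset.sum_neg_distrib]
    refine Finset.sum_congr rfl fun t _ => ?_
    ring

theorem stmt_15 {R : Type*} [CommRing R] (N : ℕ) (hN : 1 ≤ N) (x : Fin N → R) :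
    (Matrix.of fun k j : Fin N =>
        ∑ t ∈ Finset.powersetCard (k : ℕ) (Finset.univ.erase j), ∏ i ∈ t, x i).det
      = ∏ p ∈ Finset.univ.filter (fun p : Fin N × Fin N => p.1 < p.2),
          (x p.1 - x p.2) := by
  classical
  set A : Matrix (Fin N) (Fin N) R := Matrix.of fun k i : Fin N =>
    if (i : ℕ) ≤ (k : ℕ) then
      ∑ t ∈ Finset.powersetCard ((k : ℕ) - (i : ℕ)) (Finset.univ : Finset (Fin N)), ∏ i ∈ t, x i
    else 0 with hA
  set B : Matrix (Fin N) (Fin N) R := (Matrix.vandermonde (fun j => -x j)).transpose with hB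
  have hfac : (Matrix.of fun k j : Fin N =>
      ∑ t ∈ Finset.powersetCard (k : ℕ) (Finset.univ.erase j), ∏ i ∈ t, x i) = A * B := by
    ext k j
    rw [Matrix.mul_apply]
    simp only [hA, hB, Matrix.of_apply, Matrix.transpose_apply, Matrix.vandermonde_apply]
    rw [esymm_erase_eq x j (k : ℕ)]
    rw [Fin.sum_univ_eq_sum_range (fun i =>
      (if i ≤ (k : ℕ) then
        ∑ t ∈ Finset.powersetCard ((k : ℕ) - i) (Finset.univ : Finset (Fin N)), ∏ i ∈ t, x i
       else 0) * (-x j) ^ i)]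
    rw [← Finset.sum_subset (Finset.range_subset_range.mpr (Nat.succ_le_of_lt k.isLt))]
    · refine Finset.sum_congr rfl fun i hi => ?_
      have hik : i ≤ (k : ℕ) := Nat.lt_succ_iff.mp (Finset.mem_range.mp hi)
      rw [if_pos hik]
      ring
    · intro i _ hi
      have : ¬ i ≤ (k : ℕ) := fun h => hi (Finset.mem_range.mpr (Nat.lt_succ_of_le h))
      rw [if_neg this, zero_mul]
  rw [hfac, Matrix.det_mul]
  have hAdet : A.det = 1 := by
    have htri : A.BlockTriangular OrderDual.toDual := by
      intro i j hij
      have hij' : i < j := by simpa using hij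
      have hle : ¬ (j : ℕ) ≤ (i : ℕ) := by
        exact_mod_cast not_le.mpr hij'
      simp only [hA, Matrix.of_apply, if_neg hle]
    rw [Matrix.det_of_lowerTriangular A htri]
    refine Finset.prod_eq_one fun i _ => ?_
    simp [hA]
  have hBdet : B.det = ∏ p ∈ Finset.univ.filter (fun p : Fin N × Fin N => p.1 < p.2),
      (x p.1 - x p.2) := by
    rw [hB, Matrix.det_transpose, Matrix.det_vandermonde]
    rw [Finset.prod_sigma']
    refine Finset.prod_nbij' (fun p => (p.1, p.2)) (fun p => ⟨p.1, p.2⟩) ?_ ?_ ?_ ?_ ?_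
    · intro p hp
      simp only [Finset.mem_sigma, Finset.mem_Ioi] at hp
      simp [hp.2]
    · intro p hp
      simp only [Finset.mem_filter] at hp
      simp [Finset.mem_Ioi, hp.2]
    · intro p _; rfl
    · intro p _; rfl
    · intro p hp
      simp only [Finset.mem_sigma, Finset.mem_Ioi] at hp
      ring
  rw [hAdet, hBdet, one_mul]
end
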